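/- Let F(x) = (1/√(2π)) ∫_{-∞}^x exp(−s²/2) ds denote the standard Gaussian cumulative distribution function and H the Heaviside step function (H(x)=1 for x>0, H(x)=0 for x≤0). Then ∫_{-∞}^{∞} (F(s) − H(s))² ds = (√2 − 1)/√π. -/

import Mathlib

open MeasureTheory Real Filter Set Topology

/-- The standard Gaussian cumulative distribution function. -/
noncomputable def gaussCDF (x : ℝ) : ℝ :=
  (1 / Real.sqrt (2 * Real.pi)) * ∫ s in Set.Iic x, Real.exp (-s ^ 2 / 2)

/-- The Heaviside step function: `H x = 1` for `x > 0` and `H x = 0` for `x ≤ 0`. -/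
noncomputable def heaviside (x : ℝ) : ℝ := if 0 < x then 1 else 0

noncomputable def gpdf (x : ℝ) : ℝ := (1 / Real.sqrt (2 * Real.pi)) * Real.exp (-x ^ 2 / 2)

lemma gexp_integrable : Integrable (fun s : ℝ => Real.exp (-s ^ 2 / 2)) := by
  have h := integrable_exp_neg_mul_sq (b := (1:ℝ)/2) (by norm_num)
  refine h.congr (Eventually.of_forall fun s => ?_)
  ring_nf

lemma gexp4_integrable : Integrable (fun s : ℝ => Real.exp (-s ^ 2 / 4)) := by
  have h := integrable_exp_neg_mul_sq (b := (1:ℝ)/4) (by norm_num)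
  refine h.congr (Eventually.of_forall fun s => ?_)
  ring_nf

lemma integral_gexp : ∫ s : ℝ, Real.exp (-s ^ 2 / 2) = Real.sqrt (2 * Real.pi) := by
  have h := integral_gaussian (1/2)
  rw [show Real.pi / (1/2) = 2 * Real.pi by ring] at h
  rw [← h]
  congr 1
  ext s
  ring_nf


lemma gexp_cont : Continuous (fun s : ℝ => Real.exp (-s ^ 2 / 2)) := by fun_prop

lemma gaussCDF_eq (y : ℝ) :
    gaussCDF y = (1 / Real.sqrt (2 * Real.pi)) *
      ((∫ s in Set.Iic (0:ℝ), Real.exp (-s ^ 2 / 2)) + ∫ s in (0:ℝ)..y, Real.exp (-s ^ 2 / 2)) := by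
  rw [gaussCDF]
  congr 1
  rw [← intervalIntegral.integral_Iic_sub_Iic gexp_integrable.integrableOn
    gexp_integrable.integrableOn]
  ring

lemma hasDerivAt_gaussCDF' (x : ℝ) : HasDerivAt gaussCDF (gpdf x) x := by
  have hI : HasDerivAt (fun y => ∫ s in (0:ℝ)..y, Real.exp (-s ^ 2 / 2))
      (Real.exp (-x ^ 2 / 2)) x :=
    intervalIntegral.integral_hasDerivAt_right gexp_integrable.intervalIntegrable
      (gexp_cont.stronglyMeasurable.stronglyMeasurableAtFilter)
      gexp_cont.continuousAt
  have h2 := ((hI.const_add (∫ s in Set.Iic (0:ℝ), Real.exp (-s ^ 2 / 2))).const_mul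
    (1 / Real.sqrt (2 * Real.pi)))
  have : gaussCDF = fun y => (1 / Real.sqrt (2 * Real.pi)) *
      ((∫ s in Set.Iic (0:ℝ), Real.exp (-s ^ 2 / 2)) + ∫ s in (0:ℝ)..y, Real.exp (-s ^ 2 / 2)) :=
    funext gaussCDF_eq
  rw [this, gpdf]
  exact h2

lemma sqrt2pi_pos : 0 < Real.sqrt (2 * Real.pi) := Real.sqrt_pos.2 (by positivity)

lemma gaussCDF_neg (x : ℝ) : gaussCDF (-x) = 1 - gaussCDF x := by
  have h1 : (∫ s in Set.Iic (-x), Real.exp (-s ^ 2 / 2))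
      = ∫ s in Set.Ioi x, Real.exp (-s ^ 2 / 2) := by
    have h := integral_comp_neg_Iic (-x) (fun s => Real.exp (-s ^ 2 / 2))
    simp only [neg_neg] at h
    rw [← h]
    apply setIntegral_congr_fun measurableSet_Iic
    intro t _
    simp [neg_sq]
  have h2 : (∫ s in Set.Iic x, Real.exp (-s ^ 2 / 2))
      + (∫ s in Set.Ioi x, Real.exp (-s ^ 2 / 2)) = Real.sqrt (2 * Real.pi) := by
    rw [intervalIntegral.integral_Iic_add_Ioi gexp_integrable.integrableOn gexp_integrable.integrableOn,
      integral_gexp]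
  rw [gaussCDF, gaussCDF, h1]
  have h3 : (∫ s in Set.Ioi x, Real.exp (-s ^ 2 / 2))
      = Real.sqrt (2 * Real.pi) - ∫ s in Set.Iic x, Real.exp (-s ^ 2 / 2) := by linarith
  rw [h3]
  ring
  field_simp

lemma gaussCDF_nonneg (x : ℝ) : 0 ≤ gaussCDF x := by
  apply mul_nonneg (by positivity)
  apply setIntegral_nonneg measurableSet_Iic
  intro t _; positivity

lemma gaussCDF_le_one (x : ℝ) : gaussCDF x ≤ 1 := by
  have := gaussCDF_nonneg (-x)
  rw [gaussCDF_neg] at this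
  linarith

lemma gaussCDF_zero : gaussCDF 0 = 1 / 2 := by
  have := gaussCDF_neg 0
  rw [neg_zero] at this
  linarith

lemma integral_gexp4 : ∫ s : ℝ, Real.exp (-s ^ 2 / 4) = 2 * Real.sqrt Real.pi := by
  have h := integral_gaussian (1/4)
  rw [show Real.pi / (1/4) = 4 * Real.pi by ring] at h
  have h4 : Real.sqrt (4 * Real.pi) = 2 * Real.sqrt Real.pi := by
    rw [Real.sqrt_mul (by norm_num), show (4:ℝ) = 2 ^ 2 by norm_num,
      Real.sqrt_sq (by norm_num : (0:ℝ) ≤ 2)]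
  rw [h4] at h
  rw [← h]
  congr 1
  ext s
  ring_nf

lemma gaussCDF_le_bound {x : ℝ} (hx : x ≤ 0) :
    gaussCDF x ≤ Real.sqrt 2 * Real.exp (-x ^ 2 / 4) := by
  have hmono : (∫ s in Set.Iic x, Real.exp (-s ^ 2 / 2))
      ≤ ∫ s in Set.Iic x, Real.exp (-x ^ 2 / 4) * Real.exp (-s ^ 2 / 4) := by
    apply setIntegral_mono_on gexp_integrable.integrableOn
      ((gexp4_integrable.const_mul _).integrableOn) measurableSet_Iic
    intro t ht
    rw [← Real.exp_add]
    apply Real.exp_le_exp.2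
    have ht' : t ≤ x := ht
    nlinarith [sq_nonneg (t - x), sq_nonneg (t + x)]
  have h2 : (∫ s in Set.Iic x, Real.exp (-x ^ 2 / 4) * Real.exp (-s ^ 2 / 4))
      = Real.exp (-x ^ 2 / 4) * ∫ s in Set.Iic x, Real.exp (-s ^ 2 / 4) := by
    rw [MeasureTheory.integral_const_mul]
  have h3 : (∫ s in Set.Iic x, Real.exp (-s ^ 2 / 4)) ≤ 2 * Real.sqrt Real.pi := by
    rw [← integral_gexp4]
    apply setIntegral_le_integral gexp4_integrable
    filter_upwards with t using by positivity
  have hC : (1 / Real.sqrt (2 * Real.pi)) * (2 * Real.sqrt Real.pi) = Real.sqrt 2 := by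
    rw [Real.sqrt_mul (by norm_num : (0:ℝ) ≤ 2)]
    have hs2 : Real.sqrt 2 * Real.sqrt 2 = 2 := Real.mul_self_sqrt (by norm_num)
    have hπ : 0 < Real.sqrt Real.pi := Real.sqrt_pos.2 Real.pi_pos
    have h2' : 0 < Real.sqrt 2 := Real.sqrt_pos.2 (by norm_num)
    field_simp
    nlinarith
  calc gaussCDF x ≤ (1 / Real.sqrt (2 * Real.pi)) *
        (Real.exp (-x ^ 2 / 4) * (2 * Real.sqrt Real.pi)) := by
        rw [gaussCDF]
        apply mul_le_mul_of_nonneg_left _ (by positivity)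
        calc (∫ s in Set.Iic x, Real.exp (-s ^ 2 / 2))
            ≤ Real.exp (-x ^ 2 / 4) * ∫ s in Set.Iic x, Real.exp (-s ^ 2 / 4) := by
              rw [← h2]; exact hmono
          _ ≤ Real.exp (-x ^ 2 / 4) * (2 * Real.sqrt Real.pi) :=
              mul_le_mul_of_nonneg_left h3 (by positivity)
    _ = Real.sqrt 2 * Real.exp (-x ^ 2 / 4) := by
        rw [show (1 / Real.sqrt (2 * Real.pi)) * (Real.exp (-x ^ 2 / 4) * (2 * Real.sqrt Real.pi))
          = ((1 / Real.sqrt (2 * Real.pi)) * (2 * Real.sqrt Real.pi)) * Real.exp (-x ^ 2 / 4)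
          by ring, hC]

lemma tendsto_sq_atBot : Tendsto (fun x : ℝ => x ^ 2) atBot atTop := by
  have h : Tendsto (fun x : ℝ => x ^ 2) atTop atTop :=
    tendsto_pow_atTop (by norm_num)
  exact (h.comp tendsto_neg_atBot_atTop).congr fun x => neg_sq x

lemma tendsto_exp_quarter_atBot :
    Tendsto (fun x : ℝ => Real.exp (-x ^ 2 / 4)) atBot (𝓝 0) := by
  apply Real.tendsto_exp_atBot.comp
  have h1 : Tendsto (fun x : ℝ => -(x ^ 2)) atBot atBot :=
    tendsto_neg_atTop_atBot.comp tendsto_sq_atBot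
  exact h1.atBot_div_const (by norm_num : (0:ℝ) < 4)

lemma tendsto_gaussCDF_atBot : Tendsto gaussCDF atBot (𝓝 0) := by
  have hub : Tendsto (fun x : ℝ => Real.sqrt 2 * Real.exp (-x ^ 2 / 4)) atBot (𝓝 0) := by
    have := tendsto_exp_quarter_atBot.const_mul (Real.sqrt 2)
    simpa using this
  refine tendsto_of_tendsto_of_tendsto_of_le_of_le' tendsto_const_nhds hub ?_ ?_
  · filter_upwards with x using gaussCDF_nonneg x
  · filter_upwards [eventually_le_atBot (0:ℝ)] with x hx using gaussCDF_le_bound hx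

lemma tendsto_gaussCDF_atTop : Tendsto gaussCDF atTop (𝓝 1) := by
  have h := (tendsto_gaussCDF_atBot.comp tendsto_neg_atTop_atBot).const_sub 1
  simp only [Function.comp] at h
  rw [show (1:ℝ) - 0 = 1 by ring] at h
  refine h.congr fun x => ?_
  rw [← gaussCDF_neg, neg_neg]

lemma tendsto_mul_exp_atTop :
    Tendsto (fun x : ℝ => x * Real.exp (-x ^ 2 / 2)) atTop (𝓝 0) := by
  have hub : Tendsto (fun x : ℝ => x * Real.exp (-x)) atTop (𝓝 0) := by
    have h := Real.tendsto_pow_mul_exp_neg_atTop_nhds_zero 1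
    simpa using h
  refine tendsto_of_tendsto_of_tendsto_of_le_of_le' tendsto_const_nhds hub ?_ ?_
  · filter_upwards [eventually_ge_atTop (0:ℝ)] with x hx using by positivity
  · filter_upwards [eventually_ge_atTop (2:ℝ)] with x hx
    have hx0 : (0:ℝ) ≤ x := by linarith
    apply mul_le_mul_of_nonneg_left _ hx0
    apply Real.exp_le_exp.2
    nlinarith

lemma tendsto_mul_exp_atBot :
    Tendsto (fun x : ℝ => x * Real.exp (-x ^ 2 / 2)) atBot (𝓝 0) := by
  have h := (tendsto_mul_exp_atTop.comp tendsto_neg_atBot_atTop).neg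
  rw [neg_zero] at h
  refine h.congr fun x => ?_
  simp only [Function.comp]
  rw [neg_sq]
  ring

lemma hasDerivAt_gpdf (x : ℝ) : HasDerivAt gpdf (-x * gpdf x) x := by
  have hinner : HasDerivAt (fun x : ℝ => -x ^ 2 / 2) (-x) x := by
    have h := ((hasDerivAt_pow 2 x).neg.div_const 2)
    refine h.congr_deriv ?_
    simp
    ring
  have h := (hinner.exp.const_mul (1 / Real.sqrt (2 * Real.pi)))
  refine h.congr_deriv ?_
  unfold gpdf
  ring

lemma gpdf_identity (s : ℝ) :
    (1 / Real.sqrt Real.pi) * (gpdf (s * Real.sqrt 2) * Real.sqrt 2) =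
      2 * gpdf s * gpdf s := by
  unfold gpdf
  have e1 : Real.exp (-(s * Real.sqrt 2) ^ 2 / 2)
      = Real.exp (-s ^ 2 / 2) * Real.exp (-s ^ 2 / 2) := by
    rw [← Real.exp_add]
    congr 1
    rw [mul_pow, Real.sq_sqrt (by norm_num : (0:ℝ) ≤ 2)]
    ring
  rw [e1]
  have hs2 : Real.sqrt 2 * Real.sqrt 2 = 2 := Real.mul_self_sqrt (by norm_num)
  have hsπ : Real.sqrt Real.pi * Real.sqrt Real.pi = Real.pi :=
    Real.mul_self_sqrt Real.pi_pos.le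
  have h2π : Real.sqrt (2 * Real.pi) = Real.sqrt 2 * Real.sqrt Real.pi :=
    Real.sqrt_mul (by norm_num) _
  rw [h2π]
  have h2' : 0 < Real.sqrt 2 := Real.sqrt_pos.2 (by norm_num)
  have hπ' : 0 < Real.sqrt Real.pi := Real.sqrt_pos.2 Real.pi_pos
  field_simp
  ring_nf
  have h3 : Real.sqrt 2 ^ 3 = 2 * Real.sqrt 2 := by
    rw [pow_succ, Real.sq_sqrt (by norm_num : (0:ℝ) ≤ 2)]
  rw [Real.sq_sqrt (by norm_num : (0:ℝ) ≤ 2)]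

noncomputable def auxB (s : ℝ) : ℝ :=
  s * gaussCDF s ^ 2 + 2 * gpdf s * gaussCDF s
    - (1 / Real.sqrt Real.pi) * gaussCDF (s * Real.sqrt 2)

lemma hasDerivAt_auxB (s : ℝ) : HasDerivAt auxB (gaussCDF s ^ 2) s := by
  have hF := hasDerivAt_gaussCDF' s
  have h1 : HasDerivAt (fun s : ℝ => s * gaussCDF s ^ 2)
      (1 * gaussCDF s ^ 2 + s * (2 * gaussCDF s ^ 1 * gpdf s)) s :=
    (hasDerivAt_id s).mul (hF.pow 2)
  have h2 : HasDerivAt (fun s : ℝ => 2 * gpdf s * gaussCDF s)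
      ((2 * (-s * gpdf s)) * gaussCDF s + (2 * gpdf s) * gpdf s) s :=
    ((hasDerivAt_gpdf s).const_mul 2).mul hF
  have h3 : HasDerivAt (fun s : ℝ => gaussCDF (s * Real.sqrt 2))
      (gpdf (s * Real.sqrt 2) * Real.sqrt 2) s :=
    by
      have := (hasDerivAt_gaussCDF' (s * Real.sqrt 2)).comp s (hasDerivAt_mul_const (x := s) (Real.sqrt 2))
      exact this
  have h := (h1.add h2).sub (h3.const_mul (1 / Real.sqrt Real.pi))
  have hkey := gpdf_identity s
  refine h.congr_deriv ?_
  rw [hkey]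
  ring


lemma gaussCDF_continuous : Continuous gaussCDF := by
  have : Differentiable ℝ gaussCDF := fun x => (hasDerivAt_gaussCDF' x).differentiableAt
  exact this.continuous

lemma sq_le_bound {x : ℝ} (hx : x ≤ 0) :
    gaussCDF x ^ 2 ≤ Real.sqrt 2 * Real.exp (-x ^ 2 / 4) := by
  have h1 := gaussCDF_nonneg x
  have h2 := gaussCDF_le_one x
  have h3 := gaussCDF_le_bound hx
  nlinarith

lemma integrableOn_sq_Iic : IntegrableOn (fun s => gaussCDF s ^ 2) (Set.Iic (0:ℝ)) := by
  apply Integrable.mono' ((gexp4_integrable.const_mul (Real.sqrt 2)).restrict)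
  · exact ((gaussCDF_continuous.pow 2).aestronglyMeasurable).restrict
  · rw [ae_restrict_iff' measurableSet_Iic]
    filter_upwards with x hx
    rw [Real.norm_eq_abs, abs_of_nonneg (by positivity)]
    exact sq_le_bound hx

lemma integrableOn_sq_Ioi : IntegrableOn (fun s => (gaussCDF s - 1) ^ 2) (Set.Ioi (0:ℝ)) := by
  apply Integrable.mono' ((gexp4_integrable.const_mul (Real.sqrt 2)).restrict)
  · exact (((gaussCDF_continuous.sub continuous_const).pow 2).aestronglyMeasurable).restrict
  · rw [ae_restrict_iff' measurableSet_Ioi]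
    filter_upwards with x hx
    rw [Real.norm_eq_abs, abs_of_nonneg (by positivity)]
    have h1 : gaussCDF x - 1 = -gaussCDF (-x) := by
      rw [gaussCDF_neg]; ring
    rw [h1, neg_sq]
    have := sq_le_bound (show -x ≤ 0 by simp [le_of_lt (Set.mem_Ioi.mp hx)])
    rwa [neg_sq] at this

lemma tendsto_mul_exp4_atBot :
    Tendsto (fun x : ℝ => x * Real.exp (-x ^ 2 / 4)) atBot (𝓝 0) := by
  have hub : Tendsto (fun x : ℝ => x * Real.exp (-x)) atTop (𝓝 0) := by
    simpa using Real.tendsto_pow_mul_exp_neg_atTop_nhds_zero 1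
  have htop : Tendsto (fun x : ℝ => x * Real.exp (-x ^ 2 / 4)) atTop (𝓝 0) := by
    refine tendsto_of_tendsto_of_tendsto_of_le_of_le' tendsto_const_nhds hub ?_ ?_
    · filter_upwards [eventually_ge_atTop (0:ℝ)] with x hx using by positivity
    · filter_upwards [eventually_ge_atTop (4:ℝ)] with x hx
      have hx0 : (0:ℝ) ≤ x := by linarith
      apply mul_le_mul_of_nonneg_left _ hx0
      apply Real.exp_le_exp.2
      nlinarith
  have h := (htop.comp tendsto_neg_atBot_atTop).neg
  rw [neg_zero] at h
  refine h.congr fun x => ?_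
  simp only [Function.comp]
  rw [neg_sq]
  ring

lemma tendsto_gpdf_atBot : Tendsto gpdf atBot (𝓝 0) := by
  have h1 : Tendsto (fun x : ℝ => -(x ^ 2)) atBot atBot :=
    tendsto_neg_atTop_atBot.comp tendsto_sq_atBot
  have h2 : Tendsto (fun x : ℝ => Real.exp (-x ^ 2 / 2)) atBot (𝓝 0) :=
    Real.tendsto_exp_atBot.comp (h1.atBot_div_const (by norm_num : (0:ℝ) < 2))
  have := h2.const_mul (1 / Real.sqrt (2 * Real.pi))
  rw [mul_zero] at this
  exact this

lemma auxB_tendsto_atBot : Tendsto auxB atBot (𝓝 0) := by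
  have ht1 : Tendsto (fun s : ℝ => s * gaussCDF s ^ 2) atBot (𝓝 0) := by
    have hlb : Tendsto (fun s : ℝ => Real.sqrt 2 * (s * Real.exp (-s ^ 2 / 4))) atBot (𝓝 0) := by
      have := tendsto_mul_exp4_atBot.const_mul (Real.sqrt 2)
      rwa [mul_zero] at this
    refine tendsto_of_tendsto_of_tendsto_of_le_of_le' hlb tendsto_const_nhds ?_ ?_
    · filter_upwards [eventually_le_atBot (0:ℝ)] with s hs
      have := sq_le_bound hs
      nlinarith
    · filter_upwards [eventually_le_atBot (0:ℝ)] with s hs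
      have := sq_nonneg (gaussCDF s)
      nlinarith
  have ht2 : Tendsto (fun s : ℝ => 2 * gpdf s * gaussCDF s) atBot (𝓝 0) := by
    have hub : Tendsto (fun s : ℝ => 2 * gpdf s) atBot (𝓝 0) := by
      have := tendsto_gpdf_atBot.const_mul (2:ℝ)
      rwa [mul_zero] at this
    refine tendsto_of_tendsto_of_tendsto_of_le_of_le' tendsto_const_nhds hub ?_ ?_
    · filter_upwards with s
      have h1 := gaussCDF_nonneg s
      have h2 : 0 ≤ gpdf s := by unfold gpdf; positivity
      positivity
    · filter_upwards with s
      have h1 := gaussCDF_le_one s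
      have h2 : 0 ≤ gpdf s := by unfold gpdf; positivity
      nlinarith
  have ht3 : Tendsto (fun s : ℝ => (1 / Real.sqrt Real.pi) * gaussCDF (s * Real.sqrt 2))
      atBot (𝓝 0) := by
    have hcomp : Tendsto (fun s : ℝ => s * Real.sqrt 2) atBot atBot :=
      tendsto_id.atBot_mul_const (Real.sqrt_pos.2 (by norm_num))
    have := (tendsto_gaussCDF_atBot.comp hcomp).const_mul (1 / Real.sqrt Real.pi)
    rwa [mul_zero] at this
  have h := (ht1.add ht2).sub ht3
  simp only [add_zero, sub_zero] at h
  exact h.congr fun s => by unfold auxB; ring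

lemma integral_Iic_sq_eq : ∫ s in Set.Iic (0:ℝ), gaussCDF s ^ 2 = auxB 0 := by
  have h := integral_Iic_of_hasDerivAt_of_tendsto (f := auxB)
    (f' := fun s => gaussCDF s ^ 2) (a := 0) (m := 0)
    (hasDerivAt_auxB 0).continuousAt.continuousWithinAt
    (fun x _ => hasDerivAt_auxB x) integrableOn_sq_Iic auxB_tendsto_atBot
  rw [h, sub_zero]

lemma integral_Ioi_sq_eq :
    ∫ s in Set.Ioi (0:ℝ), (gaussCDF s - 1) ^ 2 = ∫ s in Set.Iic (0:ℝ), gaussCDF s ^ 2 := by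
  have h := integral_comp_neg_Iic (0:ℝ) (fun s => (gaussCDF s - 1) ^ 2)
  rw [neg_zero] at h
  rw [← h]
  apply setIntegral_congr_fun measurableSet_Iic
  intro x _
  simp only
  rw [gaussCDF_neg]
  ring

lemma auxB_zero : auxB 0 = 1 / Real.sqrt (2 * Real.pi) - 1 / (2 * Real.sqrt Real.pi) := by
  have hg : gpdf 0 = 1 / Real.sqrt (2 * Real.pi) := by
    unfold gpdf
    norm_num
  unfold auxB
  simp only [zero_mul, gaussCDF_zero, hg]
  ring

/-- `∫ (F(s) − H(s))² ds = (√2 − 1)/√π` for the standard Gaussian CDF `F` and the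
Heaviside function `H`. -/
theorem integral_sq_gaussCDF_sub_heaviside :
    ∫ s : ℝ, (gaussCDF s - heaviside s) ^ 2 =
      (Real.sqrt 2 - 1) / Real.sqrt Real.pi := by
  have hIic : IntegrableOn (fun s => (gaussCDF s - heaviside s) ^ 2) (Set.Iic (0:ℝ)) := by
    apply integrableOn_sq_Iic.congr_fun _ measurableSet_Iic
    intro x hx
    simp only [Set.mem_Iic] at hx
    simp [heaviside, show ¬ (0:ℝ) < x from not_lt.mpr hx]
  have hIoi : IntegrableOn (fun s => (gaussCDF s - heaviside s) ^ 2) (Set.Ioi (0:ℝ)) := by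
    apply integrableOn_sq_Ioi.congr_fun _ measurableSet_Ioi
    intro x hx
    have hx' : (0:ℝ) < x := hx
    simp [heaviside, hx']
  rw [← intervalIntegral.integral_Iic_add_Ioi hIic hIoi]
  have h1 : ∫ s in Set.Iic (0:ℝ), (gaussCDF s - heaviside s) ^ 2 = auxB 0 := by
    rw [← integral_Iic_sq_eq]
    apply setIntegral_congr_fun measurableSet_Iic
    intro x hx
    simp only [Set.mem_Iic] at hx
    simp [heaviside, show ¬ (0:ℝ) < x from not_lt.mpr hx]
  have h2 : ∫ s in Set.Ioi (0:ℝ), (gaussCDF s - heaviside s) ^ 2 = auxB 0 := by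
    rw [← integral_Iic_sq_eq, ← integral_Ioi_sq_eq]
    apply setIntegral_congr_fun measurableSet_Ioi
    intro x hx
    have hx' : (0:ℝ) < x := hx
    simp [heaviside, hx']
  rw [h1, h2, auxB_zero]
  have h2π : Real.sqrt (2 * Real.pi) = Real.sqrt 2 * Real.sqrt Real.pi :=
    Real.sqrt_mul (by norm_num) _
  have hs2 : Real.sqrt 2 * Real.sqrt 2 = 2 := Real.mul_self_sqrt (by norm_num)
  have h2' : 0 < Real.sqrt 2 := Real.sqrt_pos.2 (by norm_num)
  have hπ' : 0 < Real.sqrt Real.pi := Real.sqrt_pos.2 Real.pi_pos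
  rw [h2π]
  field_simp
  ring_nf
  nlinarith
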